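/- arXiv:2601.04101 — 2 statements merged into one kernel-verified Lean document; each statement's English description precedes it below -/
import Mathlib

section
/- Let B = (d_{ij}) be an n×p matrix with nonnegative entries, let λ_f ≥ 0 and λ_w > 0 with d_{·j} + λ_f > 0 for all j, and set E_λ = D_{w,λ}^{-1/2} B D_{f,λ}^{-1/2} and L_{w,λ} = I_n − E_λE_λ^⊤. Then the smallest eigenvalue of L_{w,λ} satisfies eigmin(L_{w,λ}) ≥ λ_w / (max_i d_{i·} + λ_w) > 0, and consequently ‖E_λ‖ ≤ √( max_i d_{i·} / (max_i d_{i·} + λ_w) ) < 1. -/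
open Matrix BigOperators

/-- Spectral (ℓ2 operator) norm of a real matrix. -/
noncomputable def specNorm {m n : ℕ} (A : Matrix (Fin m) (Fin n) ℝ) : ℝ :=
  ‖LinearMap.toContinuousLinearMap (Matrix.toEuclideanLin A)‖

/-!
Schur test: if `B ≥ 0` has row sums `≤ c₁ aᵢ` and column sums `≤ c₂ bⱼ`, then by Cauchy–Schwarz
applied row by row with weights `Bᵢⱼ`, `‖D_a^{-1/2} B D_b^{-1/2}‖² ≤ c₁ c₂`. For `E_λ` take
`aᵢ = d_{i·} + λ_w`, `bⱼ = d_{·j} + λ_f`, `c₂ = 1` and `c₁ = M / (M + λ_w)` with `M = maxᵢ d_{i·}`,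
since `t ↦ t / (t + λ_w)` is increasing. The same bound holds for `E_λᵀ`, so
`xᵀ E_λ E_λᵀ x ≤ c₁ ‖x‖²`, and every eigenvalue of `L_{w,λ}` is at least `1 - c₁ = λ_w / (M + λ_w)`.
-/

section SchurTest

variable {m n : Type*} [Fintype m] [Fintype n] [DecidableEq m] [DecidableEq n]

lemma mulVec_diagonal_mul_mul_diagonal_apply {R : Type*} [CommSemiring R] (u : m → R)
    (B : Matrix m n R) (v : n → R) (y : n → R) (i : m) :
    ((diagonal u * B * diagonal v) *ᵥ y) i = u i * ∑ j, B i j * (v j * y j) := by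
  have hv : diagonal v *ᵥ y = fun j => v j * y j := funext (mulVec_diagonal v y)
  rw [← mulVec_mulVec, ← mulVec_mulVec, mulVec_diagonal, hv]
  rfl

lemma transpose_diagonal_mul_mul_diagonal {R : Type*} [CommSemiring R] (u : m → R)
    (B : Matrix m n R) (v : n → R) :
    (diagonal u * B * diagonal v)ᵀ = diagonal v * Bᵀ * diagonal u := by
  simp only [transpose_mul, diagonal_transpose, Matrix.mul_assoc]

variable {B : Matrix m n ℝ} {a : m → ℝ} {b : n → ℝ}

lemma sq_diagonal_mul_mul_diagonal_mulVec_le (hB : ∀ i j, 0 ≤ B i j) (ha : ∀ i, 0 < a i)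
    (hb : ∀ j, 0 < b j) (y : n → ℝ) (i : m) :
    ((diagonal (fun i => 1 / √(a i)) * B * diagonal (fun j => 1 / √(b j))) *ᵥ y) i ^ 2
      ≤ (∑ j, B i j) / a i * ∑ j, B i j * (y j ^ 2 / b j) := by
  have hsq : ∀ j, (1 / √(b j) * y j) ^ 2 = y j ^ 2 / b j := fun j => by
    rw [mul_pow, div_pow, Real.sq_sqrt (hb j).le]; ring
  have hCS : (∑ j, B i j * (1 / √(b j) * y j)) ^ 2
      ≤ (∑ j, B i j) * ∑ j, B i j * (y j ^ 2 / b j) :=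
    Finset.sum_sq_le_sum_mul_sum_of_sq_le_mul _ (fun j _ => hB i j)
      (fun j _ => mul_nonneg (hB i j) (div_nonneg (sq_nonneg _) (hb j).le))
      (fun j _ => by rw [mul_pow, hsq, sq, mul_assoc])
  rw [mulVec_diagonal_mul_mul_diagonal_apply, mul_pow, div_pow, one_pow,
    Real.sq_sqrt (ha i).le, div_mul_eq_mul_div, one_mul, div_mul_eq_mul_div]
  exact div_le_div_of_nonneg_right hCS (ha i).le

theorem schur_test (hB : ∀ i j, 0 ≤ B i j) (ha : ∀ i, 0 < a i) (hb : ∀ j, 0 < b j)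
    {c₁ c₂ : ℝ} (hc₁ : 0 ≤ c₁) (hrow : ∀ i, ∑ j, B i j ≤ c₁ * a i)
    (hcol : ∀ j, ∑ i, B i j ≤ c₂ * b j) (y : n → ℝ) :
    (diagonal (fun i => 1 / √(a i)) * B * diagonal (fun j => 1 / √(b j))) *ᵥ y ⬝ᵥ
      (diagonal (fun i => 1 / √(a i)) * B * diagonal (fun j => 1 / √(b j))) *ᵥ y
      ≤ c₁ * c₂ * (y ⬝ᵥ y) := by
  set A := diagonal (fun i => 1 / √(a i)) * B * diagonal (fun j => 1 / √(b j))
  calc A *ᵥ y ⬝ᵥ A *ᵥ y = ∑ i, (A *ᵥ y) i ^ 2 := by simp only [dotProduct, sq]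
    _ ≤ ∑ i, (∑ j, B i j) / a i * ∑ j, B i j * (y j ^ 2 / b j) :=
        Finset.sum_le_sum fun i _ => sq_diagonal_mul_mul_diagonal_mulVec_le hB ha hb y i
    _ ≤ ∑ i, c₁ * ∑ j, B i j * (y j ^ 2 / b j) := by
        gcongr with i
        · exact Finset.sum_nonneg fun j _ =>
            mul_nonneg (hB i j) (div_nonneg (sq_nonneg _) (hb j).le)
        · exact (div_le_iff₀ (ha i)).2 (hrow i)
    _ = c₁ * ∑ j, (∑ i, B i j) * (y j ^ 2 / b j) := by
        simp only [← Finset.mul_sum, Finset.sum_mul]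
        rw [Finset.sum_comm]
    _ ≤ c₁ * ∑ j, c₂ * b j * (y j ^ 2 / b j) := by
        gcongr with j
        · exact div_nonneg (sq_nonneg _) (hb j).le
        · exact hcol j
    _ = c₁ * c₂ * (y ⬝ᵥ y) := by
        simp only [dotProduct, Finset.mul_sum]
        refine Finset.sum_congr rfl fun j _ => ?_
        field_simp [(hb j).ne']

end SchurTest

lemma le_of_one_sub_mul_transpose_mulVec_eq_smul {m n : Type*} [Fintype m] [Fintype n]
    [DecidableEq m] {A : Matrix m n ℝ} {c μ : ℝ}
    (hA : ∀ x : m → ℝ, Aᵀ *ᵥ x ⬝ᵥ Aᵀ *ᵥ x ≤ c * (x ⬝ᵥ x)) {x : m → ℝ} (hx : x ≠ 0)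
    (h : (1 - A * Aᵀ) *ᵥ x = μ • x) : 1 - c ≤ μ := by
  have hquad : x ⬝ᵥ x - Aᵀ *ᵥ x ⬝ᵥ Aᵀ *ᵥ x = μ * (x ⬝ᵥ x) := by
    have := congrArg (x ⬝ᵥ ·) h
    simpa only [sub_mulVec, one_mulVec, dotProduct_sub, ← mulVec_mulVec, dotProduct_mulVec,
      ← mulVec_transpose, dotProduct_smul, smul_eq_mul] using this
  have hpos : 0 < x ⬝ᵥ x := by
    simpa only [star_trivial] using dotProduct_star_self_pos_iff.2 hx
  nlinarith [hA x]

lemma norm_eq_sqrt_dotProduct {ι : Type*} [Fintype ι] (z : EuclideanSpace ℝ ι) :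
    ‖z‖ = √(z.ofLp ⬝ᵥ z.ofLp) := by
  rw [norm_eq_sqrt_real_inner, EuclideanSpace.inner_eq_star_dotProduct, star_trivial]

lemma specNorm_le_sqrt {m n : ℕ} {A : Matrix (Fin m) (Fin n) ℝ} {c : ℝ} (hc : 0 ≤ c)
    (hA : ∀ y, A *ᵥ y ⬝ᵥ A *ᵥ y ≤ c * (y ⬝ᵥ y)) : specNorm A ≤ √c := by
  refine ContinuousLinearMap.opNorm_le_bound _ (Real.sqrt_nonneg c) fun y => ?_
  rw [LinearMap.coe_toContinuousLinearMap', norm_eq_sqrt_dotProduct, norm_eq_sqrt_dotProduct,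
    ← Real.sqrt_mul hc]
  exact Real.sqrt_le_sqrt (hA _)

theorem stmt_3_general (n p : ℕ) (hn : 0 < n)
    (B : Matrix (Fin n) (Fin p) ℝ) (hB : ∀ i j, 0 ≤ B i j)
    (lamw lamf : ℝ) (hlamf : 0 ≤ lamf) (hlamw : 0 < lamw)
    (drow : Fin n → ℝ) (hdrow : ∀ i, drow i = ∑ j, B i j)
    (dcol : Fin p → ℝ) (hdcol : ∀ j, dcol j = ∑ i, B i j)
    (hcolpos : ∀ j, 0 < dcol j + lamf)
    (Elam : Matrix (Fin n) (Fin p) ℝ)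
    (hElam : Elam = Matrix.diagonal (fun i => 1 / Real.sqrt (drow i + lamw)) * B *
      Matrix.diagonal (fun j => 1 / Real.sqrt (dcol j + lamf)))
    (Lwl : Matrix (Fin n) (Fin n) ℝ) (hLwl : Lwl = 1 - Elam * Elamᵀ)
    (maxd : ℝ) (hmaxd : maxd = Finset.univ.sup' ⟨⟨0, hn⟩, Finset.mem_univ _⟩ drow) :
    (∀ (μ : ℝ) (x : Fin n → ℝ), x ≠ 0 → Lwl.mulVec x = μ • x →
      lamw / (maxd + lamw) ≤ μ) ∧
    0 < lamw / (maxd + lamw) ∧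
    specNorm Elam ≤ Real.sqrt (maxd / (maxd + lamw)) ∧
    Real.sqrt (maxd / (maxd + lamw)) < 1 := by
  have hdrow_nonneg : ∀ i, 0 ≤ drow i := fun i => hdrow i ▸ Finset.sum_nonneg fun j _ => hB i j
  have hdrow_le : ∀ i, drow i ≤ maxd := fun i => hmaxd ▸ Finset.le_sup' drow (Finset.mem_univ i)
  have hmaxd_nonneg : 0 ≤ maxd := (hdrow_nonneg ⟨0, hn⟩).trans (hdrow_le ⟨0, hn⟩)
  have hden : 0 < maxd + lamw := by linarith
  set c := maxd / (maxd + lamw)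
  have hc : 0 ≤ c := div_nonneg hmaxd_nonneg hden.le
  have hrowpos : ∀ i, 0 < drow i + lamw := fun i => by linarith [hdrow_nonneg i]
  have hrow : ∀ i, ∑ j, B i j ≤ c * (drow i + lamw) := fun i => by
    rw [← hdrow, div_mul_eq_mul_div, le_div_iff₀ hden]
    nlinarith [hdrow_le i]
  have hcol : ∀ j, ∑ i, B i j ≤ 1 * (dcol j + lamf) := fun j => by rw [← hdcol, one_mul]; linarith
  have hE : ∀ y, Elam *ᵥ y ⬝ᵥ Elam *ᵥ y ≤ c * (y ⬝ᵥ y) := fun y => by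
    simpa only [hElam, mul_one] using schur_test hB hrowpos hcolpos hc hrow hcol y
  have hEt : ∀ x, Elamᵀ *ᵥ x ⬝ᵥ Elamᵀ *ᵥ x ≤ c * (x ⬝ᵥ x) := fun x => by
    simpa only [hElam, transpose_diagonal_mul_mul_diagonal, one_mul] using
      schur_test (B := Bᵀ) (fun j i => hB i j) hcolpos hrowpos zero_le_one hcol hrow x
  have hgap : lamw / (maxd + lamw) = 1 - c := by
    rw [eq_sub_iff_add_eq, ← add_div, add_comm, div_self hden.ne']
  refine ⟨fun μ x hx hμ => hgap ▸ le_of_one_sub_mul_transpose_mulVec_eq_smul hEt hx (hLwl ▸ hμ),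
    div_pos hlamw hden, specNorm_le_sqrt hc hE, ?_⟩
  rw [Real.sqrt_lt' one_pos, one_pow]
  exact (div_lt_one hden).2 (by linarith)

/-- with `λ_w > 0`, the smallest eigenvalue of the regularized worker
Laplacian `L_{w,λ} = I − E_λE_λ^⊤` is at least `λ_w/(max_i d_{i·} + λ_w) > 0`, and
`‖E_λ‖ ≤ √(max_i d_{i·}/(max_i d_{i·} + λ_w)) < 1`. -/
theorem stmt_3 (n p : ℕ) (hn : 0 < n) (hp : 0 < p)
    (B : Matrix (Fin n) (Fin p) ℝ) (hB : ∀ i j, 0 ≤ B i j)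
    (lamw lamf : ℝ) (hlamf : 0 ≤ lamf) (hlamw : 0 < lamw)
    (drow : Fin n → ℝ) (hdrow : ∀ i, drow i = ∑ j, B i j)
    (dcol : Fin p → ℝ) (hdcol : ∀ j, dcol j = ∑ i, B i j)
    (hcolpos : ∀ j, 0 < dcol j + lamf)
    (Elam : Matrix (Fin n) (Fin p) ℝ)
    (hElam : Elam = Matrix.diagonal (fun i => 1 / Real.sqrt (drow i + lamw)) * B *
      Matrix.diagonal (fun j => 1 / Real.sqrt (dcol j + lamf)))
    (Lwl : Matrix (Fin n) (Fin n) ℝ) (hLwl : Lwl = 1 - Elam * Elamᵀ)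
    (maxd : ℝ) (hmaxd : maxd = Finset.univ.sup' ⟨⟨0, hn⟩, Finset.mem_univ _⟩ drow) :
    (∀ (μ : ℝ) (x : Fin n → ℝ), x ≠ 0 → Lwl.mulVec x = μ • x →
      lamw / (maxd + lamw) ≤ μ) ∧
    0 < lamw / (maxd + lamw) ∧
    specNorm Elam ≤ Real.sqrt (maxd / (maxd + lamw)) ∧
    Real.sqrt (maxd / (maxd + lamw)) < 1 :=
  stmt_3_general n p hn B hB lamw lamf hlamf hlamw drow hdrow dcol hdcol hcolpos Elam hElam Lwl hLwl
    maxd hmaxd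
end

section
/- In the degree-corrected stochastic block model setup with λ_w, λ_f > 0, for every x = (x_j) ∈ ℝ^p one has x^⊤ 𝔏_{f,λ} x ≥ λ_f Σ_j x_j² / (θ_j C(·,ℓ_j) + λ_f) ≥ ‖x‖² · λ_f / (max_j θ_j C(·,ℓ_j) + λ_f). -/
/-!
With `y = 𝔇_{f,λ}^{-1/2} x`, Cauchy–Schwarz with weights `𝔅 i j ≥ 0` gives
`(𝔅 y)_i² ≤ (∑_j 𝔅 i j) ∑_j 𝔅 i j y_j²`, and the row sum `C(k_i,·)/n_{k_i}` is below the
diagonal entry of `𝔇_{w,λ}`. Summing over `i` and exchanging the sums bounds `‖𝔈_λ x‖²` by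
`∑_j (∑_i 𝔅 i j) y_j² ≤ ∑_j θ_j C(·,ℓ_j) x_j² / (θ_j C(·,ℓ_j) + λ_f)`, and subtracting this from
`‖x‖²` leaves `λ_f ∑_j x_j² / (θ_j C(·,ℓ_j) + λ_f)`. The second inequality is termwise.
-/

open Matrix Finset

theorem sum_mul_comp_eq_sum_of_sum_fiber_eq_one {κ β R : Type*} [Fintype κ] [Fintype β]
    [DecidableEq β] [CommSemiring R] (ℓ : κ → β) {θ : κ → R}
    (hθ : ∀ b, ∑ j ∈ univ.filter (fun j => ℓ j = b), θ j = 1) (f : β → R) :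
    ∑ j, θ j * f (ℓ j) = ∑ b, f b := by
  rw [← sum_fiberwise univ ℓ]
  refine sum_congr rfl fun b _ => ?_
  rw [← one_mul (f b), ← hθ b, sum_mul]
  exact sum_congr rfl fun j hj => by rw [(mem_filter.mp hj).2]

theorem sum_div_card_fiber_le {ι β : Type*} [Fintype ι] [Fintype β] [DecidableEq β]
    (k : ι → β) {f : β → ℝ} (hf : ∀ a, 0 ≤ f a) :
    ∑ i, f (k i) / #(univ.filter (fun i' => k i' = k i)) ≤ ∑ a, f a := by
  rw [← sum_fiberwise univ k]
  refine sum_le_sum fun a _ => ?_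
  set m := #(univ.filter (fun i' => k i' = a))
  calc ∑ i ∈ univ.filter (fun i => k i = a), f (k i) / #(univ.filter (fun i' => k i' = k i))
      = m * (f a / m) := by
        rw [← nsmul_eq_mul, ← sum_const]
        exact sum_congr rfl fun i hi => by rw [(mem_filter.mp hi).2]
    _ ≤ f a := by
        rcases (Nat.cast_nonneg m : (0 : ℝ) ≤ m).eq_or_lt with hm | hm
        · rw [← hm, zero_mul]; exact hf a
        · rw [mul_div_cancel₀ _ hm.ne']

section NormalizedMatrix

variable {ι κ : Type*} [Fintype ι] [Fintype κ]

theorem sum_sq_mulVec_div_le {B : Matrix ι κ ℝ} (hB : ∀ i j, 0 ≤ B i j) {w : ι → ℝ}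
    (hw : ∀ i, 0 < w i) (hrow : ∀ i, ∑ j, B i j ≤ w i) {c : κ → ℝ}
    (hcol : ∀ j, ∑ i, B i j ≤ c j) (y : κ → ℝ) :
    ∑ i, (B *ᵥ y) i ^ 2 / w i ≤ ∑ j, c j * y j ^ 2 := by
  have hrow_sq : ∀ i, (B *ᵥ y) i ^ 2 / w i ≤ ∑ j, B i j * y j ^ 2 := fun i => by
    have hcs : (B *ᵥ y) i ^ 2 ≤ (∑ j, B i j) * ∑ j, B i j * y j ^ 2 :=
      sum_sq_le_sum_mul_sum_of_sq_le_mul univ (r := fun j => B i j * y j) (fun j _ => hB i j)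
        (fun j _ => mul_nonneg (hB i j) (sq_nonneg _)) (fun j _ => le_of_eq (by ring))
    rw [div_le_iff₀' (hw i)]
    exact hcs.trans (mul_le_mul_of_nonneg_right (hrow i)
      (sum_nonneg fun j _ => mul_nonneg (hB i j) (sq_nonneg _)))
  calc ∑ i, (B *ᵥ y) i ^ 2 / w i
      ≤ ∑ i, ∑ j, B i j * y j ^ 2 := sum_le_sum fun i _ => hrow_sq i
    _ = ∑ j, (∑ i, B i j) * y j ^ 2 := by rw [sum_comm]; simp only [sum_mul]
    _ ≤ ∑ j, c j * y j ^ 2 :=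
        sum_le_sum fun j _ => mul_le_mul_of_nonneg_right (hcol j) (sq_nonneg _)

theorem dotProduct_one_sub_transpose_mul_mulVec {R : Type*} [CommRing R] [DecidableEq κ]
    (E : Matrix ι κ R) (x : κ → R) :
    x ⬝ᵥ ((1 - Eᵀ * E) *ᵥ x) = x ⬝ᵥ x - (E *ᵥ x) ⬝ᵥ (E *ᵥ x) := by
  rw [sub_mulVec, one_mulVec, dotProduct_sub, ← mulVec_mulVec, dotProduct_mulVec,
    vecMul_transpose]

variable [DecidableEq ι] [DecidableEq κ]

theorem mul_sum_sq_div_le_dotProduct_mulVec {B : Matrix ι κ ℝ} (hB : ∀ i j, 0 ≤ B i j)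
    {r : ι → ℝ} (hrow : ∀ i, ∑ j, B i j ≤ r i) {c : κ → ℝ} (hcol : ∀ j, ∑ i, B i j ≤ c j)
    {μ ν : ℝ} (hμ : 0 < μ) (hν : 0 < ν) (x : κ → ℝ) :
    ν * ∑ j, x j ^ 2 / (c j + ν) ≤
      x ⬝ᵥ ((1 - (diagonal (fun i => 1 / √(r i + μ)) * B *
        diagonal (fun j => 1 / √(c j + ν)))ᵀ *
        (diagonal (fun i => 1 / √(r i + μ)) * B * diagonal (fun j => 1 / √(c j + ν)))) *ᵥ
          x) := by
  have hw : ∀ i, 0 < r i + μ := fun i =>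
    add_pos_of_nonneg_of_pos ((sum_nonneg fun j _ => hB i j).trans (hrow i)) hμ
  have hd : ∀ j, 0 < c j + ν := fun j =>
    add_pos_of_nonneg_of_pos ((sum_nonneg fun i _ => hB i j).trans (hcol j)) hν
  set y : κ → ℝ := fun j => 1 / √(c j + ν) * x j
  have hEx : ∀ i, ((diagonal (fun i => 1 / √(r i + μ)) * B *
      diagonal (fun j => 1 / √(c j + ν))) *ᵥ x) i ^ 2 = (B *ᵥ y) i ^ 2 / (r i + μ) :=
    fun i => by
      rw [← mulVec_mulVec, ← mulVec_mulVec, mulVec_diagonal, mul_pow, div_pow, one_pow,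
        Real.sq_sqrt (hw i).le, one_div_mul_eq_div]
      congr 3
      ext j
      exact mulVec_diagonal _ _ j
  have hgap : ∀ j, x j ^ 2 - c j * y j ^ 2 = ν * (x j ^ 2 / (c j + ν)) := fun j => by
    have := (hd j).ne'
    rw [mul_pow, div_pow, one_pow, Real.sq_sqrt (hd j).le]
    field_simp
    ring
  rw [dotProduct_one_sub_transpose_mul_mulVec]
  simp only [dotProduct, ← sq, hEx]
  calc ν * ∑ j, x j ^ 2 / (c j + ν)
      = ∑ j, x j ^ 2 - ∑ j, c j * y j ^ 2 := by rw [← sum_sub_distrib, mul_sum]; simp only [hgap]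
    _ ≤ ∑ j, x j ^ 2 - ∑ i, (B *ᵥ y) i ^ 2 / (r i + μ) := by
        gcongr
        exact sum_sq_mulVec_div_le hB hw (fun i => (hrow i).trans (le_add_of_nonneg_right hμ.le))
          hcol y

end NormalizedMatrix

theorem sum_sq_mul_div_le_mul_sum_sq_div {κ : Type*} [Fintype κ] {c : κ → ℝ} {M ν : ℝ}
    (hν : 0 ≤ ν) (hc : ∀ j, 0 < c j + ν) (hM : ∀ j, c j ≤ M) (x : κ → ℝ) :
    (∑ j, x j ^ 2) * ν / (M + ν) ≤ ν * ∑ j, x j ^ 2 / (c j + ν) := by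
  rw [mul_comm, mul_div_assoc, sum_div]
  exact mul_le_mul_of_nonneg_left (sum_le_sum fun j _ =>
    div_le_div_of_nonneg_left (sq_nonneg _) (hc j) (by linarith [hM j])) hν

theorem stmt_8_general (n p K : ℕ) (hp : 0 < p)
    (kw : Fin n → Fin K) (ll : Fin p → Fin K)
    (nsize : Fin K → ℕ)
    (hnsize : ∀ a, nsize a = (Finset.univ.filter (fun i => kw i = a)).card)
    (θ : Fin p → ℝ) (hθ : ∀ j, 0 < θ j)
    (hθsum : ∀ a, ∑ j ∈ Finset.univ.filter (fun j => ll j = a), θ j = 1)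
    (C : Matrix (Fin K) (Fin K) ℝ) (hC : ∀ a b, 0 ≤ C a b)
    (Crow : Fin K → ℝ) (hCrow : ∀ a, Crow a = ∑ b, C a b)
    (Ccol : Fin K → ℝ) (hCcol : ∀ b, Ccol b = ∑ a, C a b)
    (Bb : Matrix (Fin n) (Fin p) ℝ)
    (hBb : ∀ i j, Bb i j = θ j * C (kw i) (ll j) / (nsize (kw i) : ℝ))
    (lamw lamf : ℝ) (hlamw : 0 < lamw) (hlamf : 0 < lamf)
    (Ee : Matrix (Fin n) (Fin p) ℝ)
    (hEe : Ee = Matrix.diagonal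
        (fun i => 1 / Real.sqrt (Crow (kw i) / (nsize (kw i) : ℝ) + lamw)) * Bb *
      Matrix.diagonal (fun j => 1 / Real.sqrt (θ j * Ccol (ll j) + lamf)))
    (Lfl : Matrix (Fin p) (Fin p) ℝ) (hLfl : Lfl = 1 - Eeᵀ * Ee)
    (maxd : ℝ)
    (hmaxd : maxd = Finset.univ.sup' ⟨⟨0, hp⟩, Finset.mem_univ _⟩
      (fun j => θ j * Ccol (ll j))) :
    ∀ x : Fin p → ℝ,
      lamf * ∑ j, x j ^ 2 / (θ j * Ccol (ll j) + lamf) ≤ x ⬝ᵥ Lfl.mulVec x ∧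
      (∑ j, x j ^ 2) * lamf / (maxd + lamf) ≤
        lamf * ∑ j, x j ^ 2 / (θ j * Ccol (ll j) + lamf) := by
  intro x
  have hB : ∀ i j, 0 ≤ Bb i j := fun i j => by
    rw [hBb]; exact div_nonneg (mul_nonneg (hθ j).le (hC _ _)) (Nat.cast_nonneg _)
  have hrow : ∀ i, ∑ j, Bb i j ≤ Crow (kw i) / nsize (kw i) := fun i => by
    simp only [hBb, ← sum_div, hCrow, sum_mul_comp_eq_sum_of_sum_fiber_eq_one ll hθsum, le_refl]
  have hcol : ∀ j, ∑ i, Bb i j ≤ θ j * Ccol (ll j) := fun j => by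
    simp only [hBb, hnsize, mul_div_assoc, ← mul_sum, hCcol]
    exact mul_le_mul_of_nonneg_left (sum_div_card_fiber_le kw fun a => hC a (ll j)) (hθ j).le
  have hd : ∀ j, 0 < θ j * Ccol (ll j) + lamf := fun j =>
    add_pos_of_nonneg_of_pos ((sum_nonneg fun i _ => hB i j).trans (hcol j)) hlamf
  subst hEe hLfl hmaxd
  exact ⟨mul_sum_sq_div_le_dotProduct_mulVec hB hrow hcol hlamw hlamf x,
    sum_sq_mul_div_le_mul_sum_sq_div hlamf.le hd
      (fun j => le_sup' (fun j => θ j * Ccol (ll j)) (mem_univ j)) x⟩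

/-- in the DCSBM with `λ_w, λ_f > 0`, for every `x ∈ ℝ^p`,
`x^⊤ 𝔏_{f,λ} x ≥ λ_f Σ_j x_j²/(θ_j C(·,ℓ_j)+λ_f) ≥ ‖x‖² λ_f/(max_j θ_j C(·,ℓ_j)+λ_f)`. -/
theorem stmt_8 (n p K : ℕ) (hn : 0 < n) (hp : 0 < p) (hK : 0 < K)
    (kw : Fin n → Fin K) (ll : Fin p → Fin K)
    (nsize : Fin K → ℕ)
    (hnsize : ∀ a, nsize a = (Finset.univ.filter (fun i => kw i = a)).card)
    (hnpos : ∀ a, 0 < nsize a)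
    (θ : Fin p → ℝ) (hθ : ∀ j, 0 < θ j)
    (hθsum : ∀ a, ∑ j ∈ Finset.univ.filter (fun j => ll j = a), θ j = 1)
    (C : Matrix (Fin K) (Fin K) ℝ) (hC : ∀ a b, 0 ≤ C a b)
    (Crow : Fin K → ℝ) (hCrow : ∀ a, Crow a = ∑ b, C a b)
    (Ccol : Fin K → ℝ) (hCcol : ∀ b, Ccol b = ∑ a, C a b)
    (Bb : Matrix (Fin n) (Fin p) ℝ)
    (hBb : ∀ i j, Bb i j = θ j * C (kw i) (ll j) / (nsize (kw i) : ℝ))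
    (lamw lamf : ℝ) (hlamw : 0 < lamw) (hlamf : 0 < lamf)
    (Ee : Matrix (Fin n) (Fin p) ℝ)
    (hEe : Ee = Matrix.diagonal
        (fun i => 1 / Real.sqrt (Crow (kw i) / (nsize (kw i) : ℝ) + lamw)) * Bb *
      Matrix.diagonal (fun j => 1 / Real.sqrt (θ j * Ccol (ll j) + lamf)))
    (Lfl : Matrix (Fin p) (Fin p) ℝ) (hLfl : Lfl = 1 - Eeᵀ * Ee)
    (maxd : ℝ)
    (hmaxd : maxd = Finset.univ.sup' ⟨⟨0, hp⟩, Finset.mem_univ _⟩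
      (fun j => θ j * Ccol (ll j))) :
    ∀ x : Fin p → ℝ,
      lamf * ∑ j, x j ^ 2 / (θ j * Ccol (ll j) + lamf) ≤ x ⬝ᵥ Lfl.mulVec x ∧
      (∑ j, x j ^ 2) * lamf / (maxd + lamf) ≤
        lamf * ∑ j, x j ^ 2 / (θ j * Ccol (ll j) + lamf) :=
  stmt_8_general n p K hp kw ll nsize hnsize θ hθ hθsum C hC Crow hCrow Ccol hCcol Bb hBb lamw lamf
    hlamw hlamf Ee hEe Lfl hLfl maxd hmaxd
end
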